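/- arXiv:2402.11426 — 5 statements merged into one kernel-verified Lean document; each statement's English description precedes it below -/
import Mathlib

section
/- Let B be a set of positive integers that contains an arithmetic progression b₁ < b₂ < … < b_k with common difference Δ. Let u be a positive integer, and let A₁, …, A_ℓ be subsets of [0, u], each containing 0. Let η = max(A₁) + ⋯ + max(A_ℓ), and let S = B + A₁ + ⋯ + A_ℓ. If b_k − b₁ ≥ u − 1, then S contains a finite increasing sequence s₁ < s₂ < … < s_{k'} with s₁ = b₁, s_{k'} = b_k + η, and s_i − s_{i−1} ≤ Δ for every i ∈ [2, k']. -/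
/-!
Let `Mᵢ = max Aᵢ ≤ u`. The sumset `A₁ + ⋯ + Aₗ` lies in `[0, η]` and contains `0` and `η`, and it
has no gap longer than `u`: its partial sums `M₁ + ⋯ + Mₜ` climb from `0` to `η` in steps of at
most `u`. Adding the progression `b, b + Δ, …, b + (k - 1)Δ`, whose length `(k - 1)Δ` is at least
`u - 1`, refines every such step into steps of at most `Δ`. So the finite set
`{b + jΔ} + A₁ + ⋯ + Aₗ ⊆ S` runs from `b` to `b + (k - 1)Δ + η` with gaps at most `Δ`, and its
increasing enumeration is the required sequence.
-/

open Pointwise Finset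

def HasGapsAtMost (X : Set ℕ) (d a c : ℕ) : Prop :=
  ∀ y, a ≤ y → y < c → ∃ z ∈ X, y < z ∧ z ≤ y + d

lemma hasGapsAtMost_of_mem {X : Set ℕ} {d M : ℕ} (hM : M ∈ X) (hMd : M ≤ d) :
    HasGapsAtMost X d 0 M :=
  fun _ _ hy => ⟨M, hM, hy, by omega⟩

lemma HasGapsAtMost.add {X Y : Set ℕ} {d a α a' β : ℕ} (hX : HasGapsAtMost X d a α)
    (hY : HasGapsAtMost Y d a' β) (hα : α ∈ X) (ha' : a' ∈ Y) :
    HasGapsAtMost (X + Y) d (a + a') (α + β) := by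
  intro y hy hyc
  by_cases hyb : y < α + a'
  · obtain ⟨z, hz, hlt, hle⟩ := hX (y - a') (by omega) (by omega)
    exact ⟨z + a', Set.add_mem_add hz ha', by omega, by omega⟩
  · obtain ⟨z, hz, hlt, hle⟩ := hY (y - α) (by omega) (by omega)
    exact ⟨α + z, Set.add_mem_add hα hz, by omega, by omega⟩

lemma hasGapsAtMost_finsetSum {ι : Type*} (s : Finset ι) (A : ι → Set ℕ) (M : ι → ℕ) {d : ℕ}
    (h0 : ∀ i ∈ s, 0 ∈ A i) (hM : ∀ i ∈ s, M i ∈ A i)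
    (hgap : ∀ i ∈ s, HasGapsAtMost (A i) d 0 (M i)) :
    HasGapsAtMost (∑ i ∈ s, A i) d 0 (∑ i ∈ s, M i) := by
  classical
  induction s using Finset.induction_on with
  | empty => exact fun y _ hy => absurd hy (by simp)
  | insert i s hi ih =>
    have hzero : (0 : ℕ) ∈ ∑ j ∈ s, A j := by
      simpa using Set.finsetSum_mem_finsetSum s A 0 fun j hj => h0 j (mem_insert_of_mem hj)
    rw [sum_insert hi, sum_insert hi]
    simpa using (hgap i (mem_insert_self i s)).add
      (ih (fun j hj => h0 j (mem_insert_of_mem hj)) (fun j hj => hM j (mem_insert_of_mem hj))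
        fun j hj => hgap j (mem_insert_of_mem hj)) (hM i (mem_insert_self i s)) hzero

lemma le_sum_of_mem_finsetSum {ι : Type*} {s : Finset ι} {A : ι → Set ℕ} {M : ι → ℕ}
    (hA : ∀ i ∈ s, ∀ a ∈ A i, a ≤ M i) {x : ℕ} (hx : x ∈ ∑ i ∈ s, A i) :
    x ≤ ∑ i ∈ s, M i := by
  obtain ⟨g, hg, rfl⟩ := Set.mem_finsetSum s A x |>.mp hx
  exact sum_le_sum fun i hi => hA i hi (g i) (hg hi)

lemma exists_lt_add_mul_le {b Δ k y : ℕ} (hk : 0 < k) (hb : b ≤ y + Δ)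
    (hy : y < b + (k - 1) * Δ) :
    ∃ j < k, y < b + j * Δ ∧ b + j * Δ ≤ y + Δ := by
  by_cases hyb : y < b
  · exact ⟨0, hk, by simpa using hyb, by simpa using hb⟩
  have hΔ : 0 < Δ := Nat.pos_of_ne_zero fun h => by simp [h] at hy; omega
  have hdiv : (y - b) / Δ < k - 1 := (Nat.div_lt_iff_lt_mul hΔ).mpr (by omega)
  have hlt := Nat.lt_div_mul_add (a := y - b) hΔ
  have hle := Nat.div_mul_le_self (y - b) Δ
  refine ⟨(y - b) / Δ + 1, by omega, ?_, ?_⟩ <;> rw [add_mul, one_mul] <;> omega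

lemma hasGapsAtMost_image_add {Y : Set ℕ} {e β b Δ k : ℕ} (hY : HasGapsAtMost Y e 0 β)
    (h0 : 0 ∈ Y) (hk : 0 < k) (hΔ : 0 < Δ) (he : e - 1 ≤ (k - 1) * Δ) :
    HasGapsAtMost ((fun j => b + j * Δ) '' Set.Iio k + Y) Δ b (b + (k - 1) * Δ + β) := by
  intro y hby hy
  obtain ⟨q, hq, hqtop, hqbot⟩ : ∃ q ∈ Y, y < q + b + (k - 1) * Δ ∧ q + b ≤ y + Δ := by
    by_cases hyb : y < b + (k - 1) * Δ
    · exact ⟨0, h0, by omega, by omega⟩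
    · obtain ⟨q, hq, hlt, hle⟩ := hY (y - (b + (k - 1) * Δ)) (Nat.zero_le _) (by omega)
      exact ⟨q, hq, by omega, by omega⟩
  obtain ⟨j, hj, hlt, hle⟩ := exists_lt_add_mul_le hk hqbot hqtop
  exact ⟨b + j * Δ + q, Set.add_mem_add ⟨j, hj, rfl⟩ hq, by omega, by omega⟩

lemma Finset.exists_strictMono_of_hasGapsAtMost {T : Finset ℕ} {d a c : ℕ} (ha : a ∈ T)
    (hc : c ∈ T) (hT : ∀ x ∈ T, a ≤ x ∧ x ≤ c) (hgap : HasGapsAtMost T d a c) :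
    ∃ (n : ℕ) (s : Fin (n + 1) → ℕ), StrictMono s ∧ s 0 = a ∧ s (Fin.last n) = c ∧
      (∀ i, s i ∈ T) ∧ ∀ i : Fin n, s i.succ - s i.castSucc ≤ d := by
  have hcard : T.card = T.card - 1 + 1 := (Nat.succ_pred_eq_of_pos (card_pos.mpr ⟨a, ha⟩)).symm
  set s := T.orderEmbOfFin hcard
  have hs0 : s 0 = a := (orderEmbOfFin_zero hcard (Nat.succ_pos _)).trans <|
    le_antisymm (min'_le T a ha) (hT _ (min'_mem T _)).1
  have hslast : s (Fin.last _) = c := (orderEmbOfFin_last hcard (Nat.succ_pos _)).trans <|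
    le_antisymm (hT _ (max'_mem T _)).2 (le_max' T c hc)
  refine ⟨_, s, s.strictMono, hs0, hslast, orderEmbOfFin_mem T hcard, fun i => ?_⟩
  have hlt : s i.castSucc < c := hslast ▸ s.strictMono (Fin.castSucc_lt_last i)
  obtain ⟨z, hz, hxz, hzle⟩ := hgap (s i.castSucc) (hT _ (orderEmbOfFin_mem T hcard _)).1 hlt
  obtain ⟨j, rfl⟩ : z ∈ Set.range s := by rwa [range_orderEmbOfFin]
  have hij : i.succ ≤ j := Fin.castSucc_lt_iff_succ_le.mp (s.strictMono.lt_iff_lt.mp hxz)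
  have := s.monotone hij
  omega

theorem stmt2_general (u ℓ : ℕ)
    (A : Fin ℓ → Finset ℕ)
    (hA : ∀ i, A i ⊆ Finset.Icc 0 u)
    (h0 : ∀ i, 0 ∈ A i)
    (B : Set ℕ)
    (k : ℕ) (hk : 0 < k) (b Δ : ℕ) (hΔ : 0 < Δ)
    (hAP : ∀ j < k, b + j * Δ ∈ B)
    (η : ℕ) (hη : η = ∑ i, (A i).max' ⟨0, h0 i⟩)
    (hspan : u - 1 ≤ (k - 1) * Δ) :
    ∃ (k' : ℕ) (s : Fin (k' + 1) → ℕ),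
      StrictMono s ∧
      s 0 = b ∧
      s (Fin.last k') = b + (k - 1) * Δ + η ∧
      (∀ i, s i ∈ B + (↑(∑ i, A i) : Set ℕ)) ∧
      (∀ i : Fin k', s i.succ - s i.castSucc ≤ Δ) := by
  set M := fun i => (A i).max' ⟨0, h0 i⟩
  set P : Set ℕ := ∑ i, (A i : Set ℕ)
  have hP : ↑(∑ i, A i) = P := coe_sum _ _
  have hPgap : HasGapsAtMost P u 0 η := hη ▸ hasGapsAtMost_finsetSum _ _ M (fun i _ => h0 i)
    (fun i _ => max'_mem _ _) fun i _ => hasGapsAtMost_of_mem (max'_mem _ _)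
      (mem_Icc.mp (hA i (max'_mem _ _))).2
  have hP0 : 0 ∈ P := by
    simpa using Set.finsetSum_mem_finsetSum univ (fun i => (A i : Set ℕ)) 0 fun i _ => h0 i
  have hPη : η ∈ P := hη ▸ Set.finsetSum_mem_finsetSum univ _ M fun i _ => max'_mem _ _
  have hPle : ∀ x ∈ P, x ≤ η := fun x hx => hη ▸ le_sum_of_mem_finsetSum
    (fun i _ a ha => le_max' _ a ha) hx
  set T := (range k).image (fun j => b + j * Δ) + ∑ i, A i
  have hTP : (T : Set ℕ) = (fun j => b + j * Δ) '' Set.Iio k + P := by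
    simp only [T, coe_add, coe_image, coe_range, hP]
  have hTmem : ∀ {x}, x ∈ T ↔ ∃ j < k, ∃ p ∈ P, b + j * Δ + p = x := by
    intro x
    rw [← mem_coe, hTP, Set.mem_add]
    simp
  obtain ⟨n, s, hs, hs0, hslast, hsT, hsgap⟩ := T.exists_strictMono_of_hasGapsAtMost
    (hTmem.mpr ⟨0, hk, 0, hP0, by simp⟩) (hTmem.mpr ⟨k - 1, by omega, η, hPη, rfl⟩)
    (fun x hx => by
      obtain ⟨j, hj, p, hp, rfl⟩ := hTmem.mp hx
      have := Nat.mul_le_mul_right Δ (Nat.le_sub_one_of_lt hj)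
      have := hPle p hp
      omega)
    (hTP ▸ hasGapsAtMost_image_add hPgap hP0 hk hΔ hspan)
  refine ⟨n, s, hs, hs0, hslast, fun i => ?_, hsgap⟩
  obtain ⟨j, hj, p, hp, hx⟩ := hTmem.mp (hsT i)
  exact hx ▸ hP ▸ Set.add_mem_add (hAP j hj) hp

/-- **Extending an arithmetic progression.** Let `B` be a set of positive integers containing an
arithmetic progression `b₁ < … < b_k` with common difference `Δ`. Let `A₁, …, A_ℓ` be subsets of
`[0, u]`, each containing `0`, let `η = max(A₁) + ⋯ + max(A_ℓ)` and `S = B + A₁ + ⋯ + A_ℓ`.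
If `b_k − b₁ ≥ u − 1`, then `S` contains an increasing sequence `s₁ < ⋯ < s_{k'}` with
`s₁ = b₁`, `s_{k'} = b_k + η`, and consecutive differences at most `Δ`. -/
theorem stmt2 (u ℓ : ℕ) (hu : 0 < u)
    (A : Fin ℓ → Finset ℕ)
    (hA : ∀ i, A i ⊆ Finset.Icc 0 u)
    (h0 : ∀ i, 0 ∈ A i)
    (B : Set ℕ) (hBpos : ∀ b ∈ B, 0 < b)
    (k : ℕ) (hk : 0 < k) (b Δ : ℕ) (hΔ : 0 < Δ)
    (hAP : ∀ j < k, b + j * Δ ∈ B)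
    (η : ℕ) (hη : η = ∑ i, (A i).max' ⟨0, h0 i⟩)
    (hspan : u - 1 ≤ (k - 1) * Δ) :
    ∃ (k' : ℕ) (s : Fin (k' + 1) → ℕ),
      StrictMono s ∧
      s 0 = b ∧
      s (Fin.last k') = b + (k - 1) * Δ + η ∧
      (∀ i, s i ∈ B + (↑(∑ i, A i) : Set ℕ)) ∧
      (∀ i : Fin k', s i.succ - s i.castSucc ≤ Δ) :=
  stmt2_general u ℓ A hA h0 B k hk b Δ hΔ hAP η hη hspan
end

section
/- Let c > 0 be a real number, let u, γ, ℓ be positive integers, and let A₁, …, A_ℓ be subsets of [0, u]. If for every k ∈ [2, u+1], fewer than c·γ·u/(k−1) of the sets A₁, …, A_ℓ have size at least k, then |A₁| + |A₂| + ⋯ + |A_ℓ| ≤ ℓ + c·γ·u·(1 + log₂ u). -/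
open Finset

/-- **Sparse collections have small total size.** Let `A₁, …, A_ℓ` be subsets of `[0, u]`.
If for every `k ∈ [2, u+1]` fewer than `c·γ·u/(k−1)` of the sets have size at least `k`
(γ-sparsity), then `|A₁| + ⋯ + |A_ℓ| ≤ ℓ + c·γ·u·(1 + log₂ u)`. -/
theorem stmt4 (c : ℝ) (hc : 0 < c) (u γ ℓ : ℕ) (hu : 0 < u) (hγ : 0 < γ) (hℓ : 0 < ℓ)
    (A : Fin ℓ → Finset ℕ)
    (hsub : ∀ i, A i ⊆ Finset.Icc 0 u)
    (hsparse : ∀ k : ℕ, 2 ≤ k → k ≤ u + 1 →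
      ((Finset.univ.filter fun i => k ≤ (A i).card).card : ℝ) < c * γ * u / ((k : ℝ) - 1)) :
    ((∑ i, (A i).card : ℕ) : ℝ) ≤ ℓ + c * γ * u * (1 + Real.logb 2 u) := by
  have hcard : ∀ i, (A i).card ≤ u + 1 := by
    intro i
    have := Finset.card_le_card (hsub i)
    simpa [Nat.card_Icc] using this
  -- layer-cake decomposition
  have key : ∀ i, (A i).card = ∑ k ∈ Icc 1 (u+1), if k ≤ (A i).card then 1 else 0 := by
    intro i
    rw [Finset.sum_boole]
    have : (Icc 1 (u+1)).filter (fun k => k ≤ (A i).card) = Icc 1 (A i).card := by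
      ext k
      simp only [mem_filter, mem_Icc]
      constructor
      · rintro ⟨⟨h1, _⟩, h3⟩; exact ⟨h1, h3⟩
      · rintro ⟨h1, h2⟩; exact ⟨⟨h1, h2.trans (hcard i)⟩, h2⟩
    rw [this, Nat.card_Icc]
    simp
  have swap : (∑ i, (A i).card) = ∑ k ∈ Icc 1 (u+1),
      (Finset.univ.filter fun i : Fin ℓ => k ≤ (A i).card).card := by
    rw [Finset.sum_congr rfl (fun i _ => key i), Finset.sum_comm]
    exact Finset.sum_congr rfl fun k _ => Finset.sum_boole _ _
  rw [swap]
  push_cast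
  have hsplit : Icc 1 (u+1) = insert 1 (Icc 2 (u+1)) := by
    ext k; simp [mem_Icc]; omega
  rw [hsplit, Finset.sum_insert (by simp)]
  have h1 : ((Finset.univ.filter fun i : Fin ℓ => 1 ≤ (A i).card).card : ℝ) ≤ ℓ := by
    have : (Finset.univ.filter fun i : Fin ℓ => 1 ≤ (A i).card).card ≤ ℓ :=
      le_trans (Finset.card_filter_le _ _) (by simp)
    exact_mod_cast this
  have h2 : (∑ k ∈ Icc 2 (u+1),
      ((Finset.univ.filter fun i : Fin ℓ => k ≤ (A i).card).card : ℝ))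
      ≤ c * γ * u * (1 + Real.logb 2 u) := by
    have step : (∑ k ∈ Icc 2 (u+1),
        ((Finset.univ.filter fun i : Fin ℓ => k ≤ (A i).card).card : ℝ))
        ≤ ∑ k ∈ Icc 2 (u+1), c * γ * u / ((k : ℝ) - 1) := by
      apply Finset.sum_le_sum
      intro k hk
      rw [mem_Icc] at hk
      exact (hsparse k hk.1 hk.2).le
    refine step.trans ?_
    have hmap : Icc 2 (u+1) = (Icc 1 u).map (addRightEmbedding 1) := by
      rw [map_add_right_Icc]
    have hharm : (∑ k ∈ Icc 2 (u+1), c * γ * u / ((k : ℝ) - 1))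
        = c * γ * u * ∑ j ∈ Icc 1 u, (1 : ℝ) / j := by
      rw [hmap, Finset.sum_map, Finset.mul_sum]
      apply Finset.sum_congr rfl
      intro j hj
      rw [mem_Icc] at hj
      have : ((j : ℝ) + 1) - 1 = (j : ℝ) := by ring
      simp only [addRightEmbedding_apply]
      push_cast
      rw [this]
      ring
    rw [hharm]
    have hH : (∑ j ∈ Icc 1 u, (1 : ℝ) / j) ≤ 1 + Real.logb 2 u := by
      have hh := harmonic_le_one_add_log u
      rw [harmonic_eq_sum_Icc] at hh
      push_cast at hh
      have hlog : Real.log u ≤ Real.logb 2 u := by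
        rw [Real.logb, le_div_iff₀ (Real.log_pos (by norm_num))]
        have ha : Real.log 2 ≤ 1 := by
          have := Real.log_le_sub_one_of_pos (x := 2) (by norm_num)
          linarith
        have hb : 0 ≤ Real.log u := Real.log_natCast_nonneg u
        nlinarith
      have heq : (∑ j ∈ Icc 1 u, (1 : ℝ) / j) = ∑ j ∈ Icc 1 u, ((j : ℝ))⁻¹ := by
        simp [one_div]
      rw [heq]
      calc (∑ j ∈ Icc 1 u, ((j : ℝ))⁻¹) ≤ 1 + Real.log u := hh
        _ ≤ 1 + Real.logb 2 u := by linarith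
    have hpos : 0 ≤ c * γ * u := by positivity
    exact le_trans (mul_le_mul_of_nonneg_left hH hpos) le_rfl
  linarith
end

section
/- Let A and B be finite sets of integers and let k be a positive integer. Then |(A mod 2k) + (B mod 2k)| ≤ 3·|(A mod k) + (B mod k)|. -/
open Pointwise Finset

lemma emod_two_mul_cases (k a : ℤ) (hk : 0 < k) :
    a % (2 * k) = a % k ∨ a % (2 * k) = a % k + k := by
  have hd : a % (2 * k) % k = a % k := Int.emod_emod_of_dvd a ⟨2, by ring⟩
  set x := a % (2 * k) with hx
  have h0 : 0 ≤ x := Int.emod_nonneg a (by positivity)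
  have h1 : x < 2 * k := Int.emod_lt_of_pos a (by positivity)
  have hq := Int.mul_ediv_add_emod x k
  have hr0 : 0 ≤ x % k := Int.emod_nonneg x hk.ne'
  have hr1 : x % k < k := Int.emod_lt_of_pos x hk
  have hq0 : 0 ≤ x / k := Int.ediv_nonneg h0 hk.le
  have hq2 : x / k < 2 := by
    by_contra h
    push_neg at h
    nlinarith
  have hcases : x / k = 0 ∨ x / k = 1 := by omega
  rcases hcases with h | h <;> rw [h] at hq
  · left; omega
  · right; omega

/-- For finite sets of integers `A`, `B` and a positive integer `k`,
`|(A mod 2k) + (B mod 2k)| ≤ 3·|(A mod k) + (B mod k)|`. -/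
theorem stmt7 (A B : Finset ℤ) (k : ℕ) (hk : 0 < k) :
    (A.image (· % (2 * (k : ℤ))) + B.image (· % (2 * (k : ℤ)))).card ≤
      3 * (A.image (· % (k : ℤ)) + B.image (· % (k : ℤ))).card := by
  have hkz : (0 : ℤ) < (k : ℤ) := by exact_mod_cast hk
  set T := A.image (· % (k : ℤ)) + B.image (· % (k : ℤ)) with hT
  set C : Finset ℤ := {0, (k : ℤ), 2 * (k : ℤ)} with hC
  have hsub : (A.image (· % (2 * (k : ℤ))) + B.image (· % (2 * (k : ℤ)))) ⊆ T + C := by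
    intro s hs
    rw [Finset.mem_add] at hs
    obtain ⟨a', ha', b', hb', rfl⟩ := hs
    rw [Finset.mem_image] at ha' hb'
    obtain ⟨a, ha, rfl⟩ := ha'
    obtain ⟨b, hb, rfl⟩ := hb'
    have htmem : a % (k : ℤ) + b % (k : ℤ) ∈ T :=
      Finset.add_mem_add (Finset.mem_image_of_mem _ ha) (Finset.mem_image_of_mem _ hb)
    have hA := emod_two_mul_cases (k : ℤ) a hkz
    have hB := emod_two_mul_cases (k : ℤ) b hkz
    rw [Finset.mem_add]
    rcases hA with h1 | h1 <;> rcases hB with h2 | h2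
    · exact ⟨_, htmem, 0, by simp [hC], by omega⟩
    · exact ⟨_, htmem, (k : ℤ), by simp [hC], by omega⟩
    · exact ⟨_, htmem, (k : ℤ), by simp [hC], by omega⟩
    · exact ⟨_, htmem, 2 * (k : ℤ), by simp [hC], by omega⟩
  calc (A.image (· % (2 * (k : ℤ))) + B.image (· % (2 * (k : ℤ)))).card
      ≤ (T + C).card := Finset.card_le_card hsub
    _ ≤ T.card * C.card := Finset.card_add_le
    _ ≤ T.card * 3 := by
        apply Nat.mul_le_mul_left
        calc C.card ≤ ({(k : ℤ), 2 * (k : ℤ)} : Finset ℤ).card + 1 :=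
              Finset.card_insert_le _ _
          _ ≤ (({2 * (k : ℤ)} : Finset ℤ).card + 1) + 1 := by
              exact Nat.add_le_add_right (Finset.card_insert_le _ _) 1
          _ = 3 := by simp
    _ = 3 * T.card := Nat.mul_comm _ _
end

section
/- Let A and B be finite sets of integers and let τ be a positive integer. Then |(A mod τ) + (B mod τ)| ≤ 2·|(A + B) mod τ| and |(A + B) mod τ| ≤ |A + B|. -/
open Pointwise Finset

/-- For finite sets of integers `A`, `B` and a positive integer `τ`,
`|(A mod τ) + (B mod τ)| ≤ 2·|(A + B) mod τ|` and `|(A + B) mod τ| ≤ |A + B|`. -/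
theorem stmt8 (A B : Finset ℤ) (τ : ℕ) (hτ : 0 < τ) :
    (A.image (· % (τ : ℤ)) + B.image (· % (τ : ℤ))).card ≤
        2 * ((A + B).image (· % (τ : ℤ))).card ∧
      ((A + B).image (· % (τ : ℤ))).card ≤ (A + B).card := by
  constructor
  · set S := (A + B).image (· % (τ : ℤ)) with hS
    have hsub : A.image (· % (τ : ℤ)) + B.image (· % (τ : ℤ)) ⊆
        S ∪ S.image (· + (τ : ℤ)) := by
      intro x hx
      rw [Finset.mem_add] at hx
      obtain ⟨a', ha', b', hb', rfl⟩ := hx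
      rw [Finset.mem_image] at ha' hb'
      obtain ⟨a, ha, rfl⟩ := ha'
      obtain ⟨b, hb, rfl⟩ := hb'
      have hτ' : (0 : ℤ) < (τ : ℤ) := by exact_mod_cast hτ
      have hab : (a + b) % (τ : ℤ) ∈ S := by
        rw [hS, Finset.mem_image]
        exact ⟨a + b, Finset.add_mem_add ha hb, rfl⟩
      have h1 : (a % τ + b % τ) % τ = (a + b) % τ := (Int.add_emod a b τ).symm
      have ha0 := Int.emod_nonneg a (ne_of_gt hτ')
      have ha1 := Int.emod_lt_of_pos a hτ'
      have hb0 := Int.emod_nonneg b (ne_of_gt hτ')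
      have hb1 := Int.emod_lt_of_pos b hτ'
      have hc0 := Int.emod_nonneg (a + b) (ne_of_gt hτ')
      have hc1 := Int.emod_lt_of_pos (a + b) hτ'
      have key : a % τ + b % τ = (a + b) % τ ∨
          a % τ + b % τ = (a + b) % τ + τ := by
        rcases lt_or_ge (a % τ + b % τ) (τ : ℤ) with h | h
        · left
          rw [← h1, Int.emod_eq_of_lt (by omega) h]
        · right
          have h2 : (a % τ + b % τ - τ) % τ = (a + b) % τ := by
            rw [Int.sub_emod, Int.emod_self, sub_zero,
              Int.emod_emod_of_dvd _ dvd_rfl]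
            exact h1
          have h3 : (a % τ + b % τ - τ) % τ = a % τ + b % τ - τ :=
            Int.emod_eq_of_lt (by omega) (by omega)
          omega
      rcases key with h | h
      · exact Finset.mem_union_left _ (h ▸ hab)
      · exact Finset.mem_union_right _ (Finset.mem_image.2 ⟨_, hab, h.symm⟩)
    calc (A.image (· % (τ : ℤ)) + B.image (· % (τ : ℤ))).card
        ≤ (S ∪ S.image (· + (τ : ℤ))).card := Finset.card_le_card hsub
      _ ≤ S.card + (S.image (· + (τ : ℤ))).card := Finset.card_union_le _ _
      _ ≤ S.card + S.card := Nat.add_le_add_left Finset.card_image_le _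
      _ = 2 * S.card := (two_mul _).symm
  · exact Finset.card_image_le
end

section
/- Let X be a finite multiset of positive integers, each at most t, where t is a positive integer, and let 0 < ε. Let Y* ⊆ X be a subset maximizing Σ(Y*) subject to Σ(Y*) ≤ t, and assume Σ(Y*) ≥ t/2. Suppose a set S̃ of integers approximates S_X[0, t] with additive error ε·t, and let s̃ be the maximum element of S̃[0, (1+ε)t] (this set is nonempty). Then there exists a subset Y ⊆ X such that (1 − 4ε)·Σ(Y*) ≤ Σ(Y) ≤ (1 + 2ε)·t. -/
/-- `ApproximatesWithin S̃ S w v δ` : the set `S̃` of integers approximates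
`S[w,v] = {s ∈ S : w ≤ s ≤ v}` with additive error `δ`. -/
def ApproximatesWithin (St S : Set ℤ) (w v δ : ℝ) : Prop :=
  (∀ s ∈ S, w ≤ (s : ℝ) → (s : ℝ) ≤ v →
    ∃ t ∈ St, (s : ℝ) - δ ≤ (t : ℝ) ∧ (t : ℝ) ≤ (s : ℝ) + δ) ∧
  (∀ t ∈ St, ∃ s ∈ S, (t : ℝ) - δ ≤ (s : ℝ) ∧ (s : ℝ) ≤ (t : ℝ) + δ)

/-- The set of all subset sums of a multiset of integers. -/
def SubsetSums (X : Multiset ℤ) : Set ℤ := {s : ℤ | ∃ Y ≤ X, Y.sum = s}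

/-!
The element of `S̃` approximating `Σ(Y*)` lies in `S̃[0, (1+ε)t]`, so `s̃ ≥ Σ(Y*) − εt`; and `s̃`
is itself within `εt` of a genuine subset sum `Σ(Y)`. Hence `Σ(Y) ≥ Σ(Y*) − 2εt ≥ (1 − 4ε)Σ(Y*)`
because `t ≤ 2Σ(Y*)`, and `Σ(Y) ≤ s̃ + εt ≤ (1 + 2ε)t`. For `ε ≥ 1/4` the empty subset will do.
-/

theorem ApproximatesWithin.sub_le_of_forall_le {St S : Set ℤ} {w v δ w' v' : ℝ}
    (h : ApproximatesWithin St S w v δ) {s : ℤ} (hs : s ∈ S) (hws : w ≤ s) (hsv : s ≤ v)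
    (hw' : w' ≤ s - δ) (hv' : s + δ ≤ v') {m : ℤ}
    (hm : ∀ u ∈ St, w' ≤ (u : ℝ) → (u : ℝ) ≤ v' → u ≤ m) :
    (s : ℝ) - δ ≤ m := by
  obtain ⟨u, hu, hsu, hus⟩ := h.1 s hs hws hsv
  have hum : (u : ℝ) ≤ m := by exact_mod_cast hm u hu (by linarith) (by linarith)
  linarith

theorem stmt12_general (t : ℤ) (ht : 0 < t) (X : Multiset ℤ)
    (ε : ℝ) (hε : 0 < ε)
    (Ystar : Multiset ℤ) (hYsub : Ystar ≤ X) (hYle : Ystar.sum ≤ t)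
    (hYhalf : (t : ℝ) / 2 ≤ (Ystar.sum : ℝ))
    (St : Set ℤ)
    (happrox : ApproximatesWithin St (SubsetSums X) 0 (t : ℝ) (ε * t))
    (stilde : ℤ) (hstildemem : stilde ∈ St) (hstildeub : (stilde : ℝ) ≤ (1 + ε) * t)
    (hstildemax : ∀ s ∈ St, 0 ≤ (s : ℝ) → (s : ℝ) ≤ (1 + ε) * t → s ≤ stilde) :
    ∃ Y : Multiset ℤ, Y ≤ X ∧
      (1 - 4 * ε) * (Ystar.sum : ℝ) ≤ (Y.sum : ℝ) ∧
      (Y.sum : ℝ) ≤ (1 + 2 * ε) * t := by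
  have htR : (0 : ℝ) < t := by exact_mod_cast ht
  have hYleR : (Ystar.sum : ℝ) ≤ t := by exact_mod_cast hYle
  rcases le_or_gt (1 / 4 : ℝ) ε with hbig | hsmall
  · refine ⟨0, Multiset.zero_le X, ?_, ?_⟩ <;> simp only [Multiset.sum_zero, Int.cast_zero]
    · nlinarith
    · positivity
  obtain ⟨_, ⟨Y, hYX, rfl⟩, hYlow, hYup⟩ := happrox.2 stilde hstildemem
  have hstilde : (Ystar.sum : ℝ) - ε * t ≤ stilde :=
    happrox.sub_le_of_forall_le ⟨Ystar, hYsub, rfl⟩ (by linarith) hYleR (by nlinarith)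
      (by linarith) hstildemax
  refine ⟨Y, hYX, ?_, by linarith⟩
  nlinarith [mul_nonneg hε.le (by linarith : (0 : ℝ) ≤ 2 * Ystar.sum - t)]

/-- **From an approximate set of sums to an approximate solution value.** Let `X` be a multiset
of positive integers each at most `t`, let `ε > 0`, and let `Y*` be an optimal solution of the
Subset Sum instance `(X, t)` (maximizing `Σ(Y*) ≤ t`) with `Σ(Y*) ≥ t/2`. If `S̃` approximates
`S_X[0, t]` with additive error `ε·t` and `stilde` is the maximum element of `S̃[0, (1+ε)·t]`
(this set being nonempty), then there is `Y ⊆ X` with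
`(1 − 4ε)·Σ(Y*) ≤ Σ(Y) ≤ (1 + 2ε)·t`. -/
theorem stmt12 (t : ℤ) (ht : 0 < t) (X : Multiset ℤ)
    (hX : ∀ x ∈ X, 0 < x ∧ x ≤ t)
    (ε : ℝ) (hε : 0 < ε)
    (Ystar : Multiset ℤ) (hYsub : Ystar ≤ X) (hYle : Ystar.sum ≤ t)
    (hYopt : ∀ Y : Multiset ℤ, Y ≤ X → Y.sum ≤ t → Y.sum ≤ Ystar.sum)
    (hYhalf : (t : ℝ) / 2 ≤ (Ystar.sum : ℝ))
    (St : Set ℤ)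
    (happrox : ApproximatesWithin St (SubsetSums X) 0 (t : ℝ) (ε * t))
    (stilde : ℤ) (hstildemem : stilde ∈ St) (hstildelb : 0 ≤ (stilde : ℝ)) (hstildeub : (stilde : ℝ) ≤ (1 + ε) * t)
    (hstildemax : ∀ s ∈ St, 0 ≤ (s : ℝ) → (s : ℝ) ≤ (1 + ε) * t → s ≤ stilde) :
    ∃ Y : Multiset ℤ, Y ≤ X ∧
      (1 - 4 * ε) * (Ystar.sum : ℝ) ≤ (Y.sum : ℝ) ∧
      (Y.sum : ℝ) ≤ (1 + 2 * ε) * t :=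
  stmt12_general t ht X ε hε Ystar hYsub hYle hYhalf St happrox stilde hstildemem hstildeub
    hstildemax
end
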